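/- Let d ≥ 1, μ ∈ M_c^+(ℝ^d), and 0 ≤ α ≤ β ≤ ∞. Let F(α,β) = {x ∈ supp(μ) : α ≤ d̲(μ,x) and d̄(μ,x) ≤ β}. Then dim_H F(α,β) ≤ f̲^LD_μ(α,β), with the convention dim_H ∅ = −∞. -/

import Mathlib

open MeasureTheory Metric Set Filter Topology
open scoped ENNReal NNReal

noncomputable section

/-- `ℝ^d` with the Euclidean metric. -/
abbrev Euc (d : ℕ) : Type := EuclideanSpace ℝ (Fin d)

/-- The topological support of a Borel measure on `ℝ^d`. -/
def msupp {d : ℕ} (μ : Measure (Euc d)) : Set (Euc d) :=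
  {x | ∀ r : ℝ, 0 < r → 0 < μ (closedBall x r)}

/-- `μ ∈ 𝓜_c^+(ℝ^d)`: a nonzero finite compactly supported Borel measure. -/
def McPlus {d : ℕ} (μ : Measure (Euc d)) : Prop :=
  IsFiniteMeasure μ ∧ μ ≠ 0 ∧ ∃ K : Set (Euc d), IsCompact K ∧ μ Kᶜ = 0

/-- Logarithm `ℝ≥0∞ → EReal`, with `log 0 = ⊥` and `log ⊤ = ⊤`. -/
def elog (x : ℝ≥0∞) : EReal :=
  if x = 0 then ⊥ else if x = ⊤ then ⊤ else ((Real.log x.toReal : ℝ) : EReal)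

/-- Lower local dimension `liminf_{r→0⁺} log μ(B(x,r)) / log r`, valued in `EReal`. -/
def dLow {d : ℕ} (μ : Measure (Euc d)) (x : Euc d) : EReal :=
  Filter.liminf
    (fun r : ℝ => elog (μ (closedBall x r)) * (((Real.log r)⁻¹ : ℝ) : EReal)) (𝓝[>] (0:ℝ))

/-- Upper local dimension `limsup_{r→0⁺} log μ(B(x,r)) / log r`, valued in `EReal`. -/
def dUp {d : ℕ} (μ : Measure (Euc d)) (x : Euc d) : EReal :=
  Filter.limsup
    (fun r : ℝ => elog (μ (closedBall x r)) * (((Real.log r)⁻¹ : ℝ) : EReal)) (𝓝[>] (0:ℝ))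

/-- The level set `E(μ,α,β)`. -/
def Eab {d : ℕ} (μ : Measure (Euc d)) (α β : EReal) : Set (Euc d) :=
  {x ∈ msupp μ | dLow μ x = α ∧ dUp μ x = β}

/-- The level set `E̲(μ,α)`. -/
def Elow {d : ℕ} (μ : Measure (Euc d)) (α : EReal) : Set (Euc d) :=
  {x ∈ msupp μ | dLow μ x = α}

/-- The level set `Ē(μ,α)`. -/
def Eup {d : ℕ} (μ : Measure (Euc d)) (α : EReal) : Set (Euc d) :=
  {x ∈ msupp μ | dUp μ x = α}

/-- The level set `E(μ,α) = E(μ,α,α)`. -/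
def Epoint {d : ℕ} (μ : Measure (Euc d)) (α : EReal) : Set (Euc d) := Eab μ α α

-- Hausdorff dimension with the convention `dim_H ∅ = −∞`, valued in `EReal`.
open Classical in
def dimHE {X : Type*} [EMetricSpace X] (s : Set X) : EReal :=
  if s = ∅ then ⊥ else ((dimH s : ℝ≥0∞) : EReal)

/-- A centered packing of `supp μ` by pairwise disjoint closed balls of radius `r`. -/
def IsPacking {d : ℕ} (μ : Measure (Euc d)) (r : ℝ) (P : Set (Euc d)) : Prop :=
  P ⊆ msupp μ ∧ P.PairwiseDisjoint fun x => closedBall x r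

/-- `sup { Σ_i μ(B(x_i,r))^q }` over all centered packings of radius `r`. -/
def packSum {d : ℕ} (μ : Measure (Euc d)) (q r : ℝ) : ℝ≥0∞ :=
  ⨆ (P : Set (Euc d)) (_ : IsPacking μ r P), ∑' x : P, μ (closedBall (x : Euc d) r) ^ q

/-- The lower `L^q`-spectrum `τ_μ`. -/
def tauLow {d : ℕ} (μ : Measure (Euc d)) (q : ℝ) : EReal :=
  Filter.liminf (fun r : ℝ => elog (packSum μ q r) * (((Real.log r)⁻¹ : ℝ) : EReal)) (𝓝[>] (0:ℝ))

/-- The upper `L^q`-spectrum `τ̄_μ`. -/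
def tauUp {d : ℕ} (μ : Measure (Euc d)) (q : ℝ) : EReal :=
  Filter.limsup (fun r : ℝ => elog (packSum μ q r) * (((Real.log r)⁻¹ : ℝ) : EReal)) (𝓝[>] (0:ℝ))

/-- Extended concave Legendre–Fenchel transform of `τ : ℝ → ℝ∪{−∞}` at `α ∈ ℝ∪{∞}`;
the `EReal` product `α * q` encodes the conventions `∞·q = −∞` for `q < 0`, `∞·0 = 0`. -/
def eLegendre (τ : ℝ → EReal) (α : EReal) : EReal :=
  sInf {v : EReal | ∃ q : ℝ, τ q ≠ ⊥ ∧ (α = ⊤ → q ≤ 0) ∧ v = α * (q : EReal) - τ q}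

/-- Legendre–Fenchel transform `f*` of a spectrum `f` defined on `ℝ∪{∞}`;
the `EReal` product `q * α` encodes the conventions `q·∞ = ±∞` for `q ≷ 0`, `0·∞ = 0`. -/
def specStar (f : EReal → EReal) (q : ℝ) : EReal :=
  sInf {v : EReal | ∃ α : EReal, α ≠ ⊥ ∧ f α ≠ ⊥ ∧ v = (q : EReal) * α - f α}

/-- `sup #{i : lo ≤ μ(B(x_i,r)) ≤ hi}` over all centered packings of radius `r`. -/
def ldCount {d : ℕ} (μ : Measure (Euc d)) (lo hi : ℝ≥0∞) (r : ℝ) : ℝ≥0∞ :=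
  ⨆ (P : Set (Euc d)) (_ : IsPacking μ r P),
    ({x ∈ P | lo ≤ μ (closedBall x r) ∧ μ (closedBall x r) ≤ hi}).encard

/-- `r ^ γ` for an extended exponent `γ`, with the convention `r^∞ = 0`. -/
def rpowE (r : ℝ) (γ : EReal) : ℝ≥0∞ :=
  if γ = ⊤ then 0 else if γ = ⊥ then ⊤ else ENNReal.ofReal (r ^ γ.toReal)

/-- The lower large-deviations spectrum `f̲^LD_μ(α,β)` for `0 ≤ α ≤ β ≤ ∞`. -/
def fLDlowAB {d : ℕ} (μ : Measure (Euc d)) (α β : EReal) : EReal :=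
  if α = ⊤ then
    ⨅ A : ℝ, Filter.liminf
      (fun r : ℝ => elog (ldCount μ 0 (ENNReal.ofReal (r ^ A)) r) * (((-Real.log r)⁻¹ : ℝ) : EReal))
      (𝓝[>] (0:ℝ))
  else
    ⨅ (ε : ℝ) (_ : 0 < ε), Filter.liminf
      (fun r : ℝ =>
        elog (ldCount μ (rpowE r (β + (ε : EReal))) (rpowE r (α - (ε : EReal))) r) *
          (((-Real.log r)⁻¹ : ℝ) : EReal))
      (𝓝[>] (0:ℝ))

/-- The lower large-deviations spectrum `f̲^LD_μ(α)`. -/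
def fLDlow {d : ℕ} (μ : Measure (Euc d)) (α : EReal) : EReal := fLDlowAB μ α α

/-- The upper large-deviations spectrum `f̄^LD_μ(α)`. -/
def fLDup {d : ℕ} (μ : Measure (Euc d)) (α : EReal) : EReal :=
  if α = ⊤ then
    ⨅ A : ℝ, Filter.limsup
      (fun r : ℝ => elog (ldCount μ 0 (ENNReal.ofReal (r ^ A)) r) * (((-Real.log r)⁻¹ : ℝ) : EReal))
      (𝓝[>] (0:ℝ))
  else
    ⨅ (ε : ℝ) (_ : 0 < ε), Filter.limsup
      (fun r : ℝ =>
        elog (ldCount μ (rpowE r (α + (ε : EReal))) (rpowE r (α - (ε : EReal))) r) *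
          (((-Real.log r)⁻¹ : ℝ) : EReal))
      (𝓝[>] (0:ℝ))

/-- `μ` is exact dimensional with dimension `D`. -/
def ExactDim {d : ℕ} (μ : Measure (Euc d)) (D : ℝ) : Prop :=
  ∀ᵐ x ∂μ, Filter.Tendsto (fun r : ℝ => Real.log (μ (closedBall x r)).toReal / Real.log r)
    (𝓝[>] (0:ℝ)) (𝓝 D)

/-- `μ` is homogeneously multifractal: the lower Hausdorff spectrum of the restriction of `μ`
to any closed ball whose interior meets `supp μ` coincides with that of `μ`. -/
def HMmeas {d : ℕ} (μ : Measure (Euc d)) : Prop :=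
  ∀ (c : Euc d) (R : ℝ), (interior (closedBall c R) ∩ msupp μ).Nonempty →
    ∀ α : EReal, 0 ≤ α →
      dimHE (Elow (μ.restrict (closedBall c R)) α) = dimHE (Elow μ α)

/-- The necessary properties of an `L^q`-spectrum in dimension `d`. -/
structure IsLqSpec (d : ℕ) (τ : ℝ → EReal) : Prop where
  ne_top : ∀ q : ℝ, τ q ≠ ⊤
  concave : ∀ q₁ q₂ t : ℝ, 0 ≤ t → t ≤ 1 →
    ((t : ℝ) : EReal) * τ q₁ + (((1 - t : ℝ)) : EReal) * τ q₂ ≤ τ (t * q₁ + (1 - t) * q₂)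
  mono : Monotone τ
  at_one : τ 1 = 0
  neg_d_le : -(((d : ℝ)) : EReal) ≤ τ 0
  le_zero : τ 0 ≤ 0
  dom : {q : ℝ | τ q ≠ ⊥} = Set.univ ∨ {q : ℝ | τ q ≠ ⊥} = Set.Ici 0
  star_nonneg : ∀ α : EReal, eLegendre τ α ≠ ⊥ → 0 ≤ eLegendre τ α

/-- The class `𝓕(d)` of candidate lower Hausdorff spectra, viewed as functions on
`ℝ∪{∞} ⊂ EReal` (the value at `⊥` is irrelevant: the domain condition forces `f ⊥ = ⊥`). -/
structure IsFd (d : ℕ) (f : EReal → EReal) : Prop where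
  hasFix : ∃ D : ℝ, f ((D : ℝ) : EReal) = ((D : ℝ) : EReal)
  dom_sub : {α : EReal | f α ≠ ⊥} ⊆ Set.Ici (0 : EReal)
  dom_closed : IsClosed {α : EReal | f α ≠ ⊥}
  range' : ∀ α : EReal, f α = ⊥ ∨ (0 ≤ f α ∧ f α ≤ ((d : ℝ) : EReal))
  usc : UpperSemicontinuousOn f {α : EReal | ⊥ < α}
  le_id : ∀ α : EReal, f α ≤ α

/-- Concavity of a spectrum on the real part of its domain. -/
def SpecConcave (f : EReal → EReal) : Prop :=
  ∀ α₁ α₂ t : ℝ, f ((α₁ : ℝ) : EReal) ≠ ⊥ → f ((α₂ : ℝ) : EReal) ≠ ⊥ → 0 ≤ t → t ≤ 1 →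
    ((t : ℝ) : EReal) * f ((α₁ : ℝ) : EReal) + (((1 - t : ℝ)) : EReal) * f ((α₂ : ℝ) : EReal) ≤
      f (((t * α₁ + (1 - t) * α₂ : ℝ)) : EReal)

/-! If `α ≤ d̲(μ,x)` and `d̄(μ,x) ≤ β`, then `r^(β+ε) ≤ μ(B(x,r)) ≤ r^(α-ε)` for all small `r`.
Hence `F(α,β)` is a countable union of pieces on which these bounds hold below a fixed scale.
For such a piece and such an `r`, a maximal disjoint family of balls `B(x,r)` centred in it is a
packing counted by the large-deviation count, and the enlarged balls `B(x,4r)` cover the piece.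
At scales where that count is at most `r^(-z)`, the `z`-dimensional Hausdorff sums of these
covers stay bounded, so every piece, and therefore `F(α,β)`, has dimension at most `z`. -/

theorem elog_mul_inv_log_eq_logb {m : ℝ≥0∞} (hm0 : m ≠ 0) (hmT : m ≠ ⊤) (b : ℝ) :
    elog m * (((Real.log b)⁻¹ : ℝ) : EReal) = (Real.logb b m.toReal : EReal) := by
  rw [elog, if_neg hm0, if_neg hmT, ← EReal.coe_mul, Real.logb, div_eq_mul_inv]

section LogRatio

variable {r : ℝ}

theorem le_ofReal_rpow_of_lt_elog_mul_inv_log (hr0 : 0 < r) (hr1 : r < 1) {m : ℝ≥0∞}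
    (hm0 : m ≠ 0) (hmT : m ≠ ⊤) {a : ℝ}
    (h : (a : EReal) < elog m * (((Real.log r)⁻¹ : ℝ) : EReal)) :
    m ≤ ENNReal.ofReal (r ^ a) := by
  rw [elog_mul_inv_log_eq_logb hm0 hmT, EReal.coe_lt_coe_iff,
    Real.lt_logb_iff_rpow_lt_of_base_lt_one hr0 hr1 (ENNReal.toReal_pos hm0 hmT)] at h
  exact (ENNReal.le_ofReal_iff_toReal_le hmT (by positivity)).2 h.le

theorem ofReal_rpow_le_of_elog_mul_inv_log_lt (hr0 : 0 < r) (hr1 : r < 1) {m : ℝ≥0∞}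
    (hm0 : m ≠ 0) (hmT : m ≠ ⊤) {b : ℝ}
    (h : elog m * (((Real.log r)⁻¹ : ℝ) : EReal) < (b : EReal)) :
    ENNReal.ofReal (r ^ b) ≤ m := by
  rw [elog_mul_inv_log_eq_logb hm0 hmT, EReal.coe_lt_coe_iff,
    Real.logb_lt_iff_lt_rpow_of_base_lt_one hr0 hr1 (ENNReal.toReal_pos hm0 hmT)] at h
  exact (ENNReal.ofReal_le_iff_le_toReal hmT).2 h.le

theorem le_ofReal_rpow_neg_of_elog_mul_inv_neg_log_lt (hr0 : 0 < r) (hr1 : r < 1) {N : ℝ≥0∞}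
    {z : ℝ} (h : elog N * (((-Real.log r)⁻¹ : ℝ) : EReal) < (z : EReal)) :
    N ≤ ENNReal.ofReal (r ^ (-z)) := by
  rcases eq_or_ne N 0 with rfl | hN0
  · exact zero_le
  have hpos : 0 < (-Real.log r)⁻¹ := inv_pos.2 (neg_pos.2 (Real.log_neg hr0 hr1))
  rcases eq_or_ne N ⊤ with rfl | hNT
  · rw [elog, if_neg hN0, if_pos rfl, EReal.top_mul_coe_of_pos hpos] at h
    exact absurd h (not_lt.2 le_top)
  rw [← Real.log_inv, elog_mul_inv_log_eq_logb hN0 hNT, EReal.coe_lt_coe_iff,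
    Real.logb_lt_iff_lt_rpow ((one_lt_inv₀ hr0).2 hr1) (ENNReal.toReal_pos hN0 hNT),
    Real.inv_rpow hr0.le, ← Real.rpow_neg hr0.le] at h
  exact (ENNReal.le_ofReal_iff_toReal_le hNT (by positivity)).2 h.le

end LogRatio

@[simp]
theorem rpowE_coe (r a : ℝ) : rpowE r (a : EReal) = ENNReal.ofReal (r ^ a) := by
  simp [rpowE]

section LocalDimension

variable {d : ℕ} {μ : Measure (Euc d)} [IsLocallyFiniteMeasure μ] {x : Euc d}

theorem eventually_measure_closedBall_le_rpow (hx : x ∈ msupp μ) {a : ℝ}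
    (h : (a : EReal) < dLow μ x) :
    ∀ᶠ r in 𝓝[>] 0, μ (closedBall x r) ≤ ENNReal.ofReal (r ^ a) := by
  filter_upwards [eventually_lt_of_lt_liminf h, Ioo_mem_nhdsGT one_pos] with r hr hr01
  exact le_ofReal_rpow_of_lt_elog_mul_inv_log hr01.1 hr01.2 (hx r hr01.1).ne'
    measure_closedBall_lt_top.ne hr

theorem eventually_rpow_le_measure_closedBall (hx : x ∈ msupp μ) {b : ℝ}
    (h : dUp μ x < (b : EReal)) :
    ∀ᶠ r in 𝓝[>] 0, ENNReal.ofReal (r ^ b) ≤ μ (closedBall x r) := by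
  filter_upwards [eventually_lt_of_limsup_lt h, Ioo_mem_nhdsGT one_pos] with r hr hr01
  exact ofReal_rpow_le_of_elog_mul_inv_log_lt hr01.1 hr01.2 (hx r hr01.1).ne'
    measure_closedBall_lt_top.ne hr

theorem eventually_measure_closedBall_le_rpowE_sub (hx : x ∈ msupp μ) {α : EReal} (hα : α ≠ ⊤)
    (h : α ≤ dLow μ x) {ε : ℝ} (hε : 0 < ε) :
    ∀ᶠ r in 𝓝[>] 0, μ (closedBall x r) ≤ rpowE r (α - ε) := by
  induction α using EReal.rec with
  | bot => simp [rpowE]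
  | coe a =>
    rw [← EReal.coe_sub]
    simp only [rpowE_coe]
    exact eventually_measure_closedBall_le_rpow hx
      ((EReal.coe_lt_coe_iff.2 (sub_lt_self a hε)).trans_le h)
  | top => exact absurd rfl hα

theorem eventually_rpowE_add_le_measure_closedBall (hx : x ∈ msupp μ) {β : EReal} (hβ : β ≠ ⊥)
    (h : dUp μ x ≤ β) {ε : ℝ} (hε : 0 < ε) :
    ∀ᶠ r in 𝓝[>] 0, rpowE r (β + ε) ≤ μ (closedBall x r) := by
  induction β using EReal.rec with
  | bot => exact absurd rfl hβ
  | coe b =>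
    rw [← EReal.coe_add]
    simp only [rpowE_coe]
    exact eventually_rpow_le_measure_closedBall hx
      (h.trans_lt (EReal.coe_lt_coe_iff.2 (lt_add_of_pos_right b hε)))
  | top => simp [rpowE]

end LocalDimension

theorem encard_le_ldCount {d : ℕ} {μ : Measure (Euc d)} {lo hi : ℝ≥0∞} {r : ℝ}
    {P : Set (Euc d)} (hP : IsPacking μ r P)
    (hb : ∀ x ∈ P, lo ≤ μ (closedBall x r) ∧ μ (closedBall x r) ≤ hi) :
    (P.encard : ℝ≥0∞) ≤ ldCount μ lo hi r := by
  have hsep : {x ∈ P | lo ≤ μ (closedBall x r) ∧ μ (closedBall x r) ≤ hi} = P :=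
    sep_eq_self_iff_mem_true.2 hb
  unfold ldCount
  exact le_iSup₂_of_le P hP (by rw [hsep])

theorem eq_iUnion_setOf_forall_Ioo {α : Type*} {F : Set α} {p : α → ℝ → Prop}
    (h : ∀ x ∈ F, ∀ᶠ r in 𝓝[>] 0, p x r) :
    F = ⋃ n : ℕ, {x ∈ F | ∀ r ∈ Ioo 0 (1 / (n + 1 : ℝ)), p x r} := by
  refine Subset.antisymm (fun x hx => ?_) (iUnion_subset fun n => sep_subset _ _)
  obtain ⟨u, hu, hsub⟩ := mem_nhdsGT_iff_exists_Ioo_subset.1 (h x hx)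
  obtain ⟨n, hn⟩ := exists_nat_one_div_lt (mem_Ioi.1 hu)
  exact mem_iUnion.2 ⟨n, hx, fun r hr => hsub ⟨hr.1, hr.2.trans hn⟩⟩

theorem dimHE_of_nonempty {X : Type*} [EMetricSpace X] {s : Set X} (hs : s.Nonempty) :
    dimHE s = ((dimH s : ℝ≥0∞) : EReal) :=
  if_neg hs.ne_empty

theorem dimHE_iUnion_le {X ι : Type*} [EMetricSpace X] [Countable ι] {s : ι → Set X} {c : EReal}
    (h : ∀ i, dimHE (s i) ≤ c) : dimHE (⋃ i, s i) ≤ c := by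
  rcases eq_empty_or_nonempty (⋃ i, s i) with hU | hU
  · rw [dimHE, if_pos hU]
    exact bot_le
  obtain ⟨i, hi⟩ := nonempty_iUnion.1 hU
  have hc : 0 ≤ c := (EReal.coe_ennreal_nonneg _).trans (dimHE_of_nonempty hi ▸ h i)
  have hle : ∀ i, ((dimH (s i) : ℝ≥0∞) : EReal) ≤ c := fun i => by
    rcases eq_empty_or_nonempty (s i) with hs | hs
    · simpa [hs] using hc
    · exact dimHE_of_nonempty hs ▸ h i
  rcases eq_or_ne c ⊤ with rfl | hcT
  · exact le_top
  rw [dimHE_of_nonempty hU, dimH_iUnion, ← EReal.coe_toENNReal hc,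
    EReal.coe_ennreal_le_coe_ennreal_iff]
  refine iSup_le fun i => ?_
  rw [← EReal.coe_ennreal_le_coe_ennreal_iff, EReal.coe_toENNReal hc]
  exact hle i

theorem ediam_closedBall_le_ofReal {X : Type*} [PseudoMetricSpace X] (p : X) {ρ : ℝ}
    (hρ : 0 ≤ ρ) : ediam (closedBall p ρ) ≤ ENNReal.ofReal (2 * ρ) := by
  rw [← Metric.closedEBall_ofReal hρ, ENNReal.ofReal_mul zero_le_two, ENNReal.ofReal_ofNat]
  exact ediam_closedEBall_le

theorem tsum_ediam_closedBall_rpow_le {X : Type*} [PseudoMetricSpace X] (P : Set X) {ρ s : ℝ}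
    (hρ : 0 ≤ ρ) (hs : 0 ≤ s) :
    ∑' p : P, ediam (closedBall (p : X) ρ) ^ s ≤ P.encard * ENNReal.ofReal (2 * ρ) ^ s :=
  calc ∑' p : P, ediam (closedBall (p : X) ρ) ^ s
      ≤ ∑' _ : P, ENNReal.ofReal (2 * ρ) ^ s :=
        ENNReal.tsum_le_tsum fun _ => ENNReal.rpow_le_rpow (ediam_closedBall_le_ofReal _ hρ) hs
    _ = P.encard * ENNReal.ofReal (2 * ρ) ^ s := ENNReal.tsum_const _

theorem hausdorffMeasure_le_of_forall_cover {X : Type*} [MetricSpace X] [MeasurableSpace X]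
    [BorelSpace X] {G : Set X} {s C : ℝ} (hs : 0 ≤ s) (hC : 0 ≤ C) {R : ℕ → ℝ}
    (hR : Tendsto R atTop (𝓝 0)) (hR0 : ∀ n, 0 < R n) {P : ℕ → Set X}
    (hPcard : ∀ n, ((P n).encard : ℝ≥0∞) ≤ ENNReal.ofReal (R n ^ (-s)))
    (hPcov : ∀ n, G ⊆ ⋃ p ∈ P n, closedBall p (C * R n)) :
    μH[s] G ≤ ENNReal.ofReal ((2 * C) ^ s) := by
  have : ∀ n, Countable (P n) := fun n =>
    (Set.encard_ne_top_iff.1 fun htop => by simpa [htop] using hPcard n).countable.to_subtype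
  have hsum : ∀ n, ∑' p : P n, ediam (closedBall (p : X) (C * R n)) ^ s ≤
      ENNReal.ofReal ((2 * C) ^ s) := fun n => by
    have hRs : 0 < R n ^ s := Real.rpow_pos_of_pos (hR0 n) s
    have hrpow : R n ^ (-s) * (2 * (C * R n)) ^ s = (2 * C) ^ s := by
      rw [← mul_assoc, Real.mul_rpow (by positivity) (hR0 n).le, Real.rpow_neg (hR0 n).le]
      field_simp
    calc ∑' p : P n, ediam (closedBall (p : X) (C * R n)) ^ s
        ≤ (P n).encard * ENNReal.ofReal (2 * (C * R n)) ^ s :=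
          tsum_ediam_closedBall_rpow_le _ (mul_nonneg hC (hR0 n).le) hs
      _ ≤ ENNReal.ofReal (R n ^ (-s)) * ENNReal.ofReal (2 * (C * R n)) ^ s := by
          gcongr; exact hPcard n
      _ = ENNReal.ofReal ((2 * C) ^ s) := by
          rw [ENNReal.ofReal_rpow_of_nonneg (by have := hR0 n; positivity) hs,
            ← ENNReal.ofReal_mul (Real.rpow_pos_of_pos (hR0 n) _).le, hrpow]
  refine (Measure.hausdorffMeasure_le_liminf_tsum s G
    (fun n => ENNReal.ofReal (2 * (C * R n))) ?_
    (fun n (p : P n) => closedBall (p : X) (C * R n))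
    (Eventually.of_forall fun n p => ediam_closedBall_le_ofReal _ (mul_nonneg hC (hR0 n).le))
    (Eventually.of_forall fun n => by simpa only [iUnion_coe_set] using hPcov n)).trans
    (liminf_le_of_frequently_le' (Frequently.of_forall (f := atTop) hsum))
  simpa using ENNReal.tendsto_ofReal ((hR.const_mul C).const_mul 2)

theorem dimHE_le_of_frequently_cover {X : Type*} [MetricSpace X] {G : Set X} {s C : ℝ}
    (hC : 0 ≤ C)
    (h : ∃ᶠ r in 𝓝[>] 0, ∃ P : Set X, (P.encard : ℝ≥0∞) ≤ ENNReal.ofReal (r ^ (-s)) ∧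
      G ⊆ ⋃ p ∈ P, closedBall p (C * r)) :
    dimHE G ≤ s := by
  borelize X
  rcases eq_empty_or_nonempty G with rfl | hG
  · simp [dimHE]
  obtain ⟨R, hR, hRP⟩ :=
    exists_seq_forall_of_frequently (h.and_eventually (Ioo_mem_nhdsGT one_pos))
  choose P hPcard hPcov using fun n => (hRP n).1
  have hR0 : ∀ n, 0 < R n := fun n => (hRP n).2.1
  -- a nonempty `G` needs at least one ball, so `1 ≤ r ^ (-s)` for some `r < 1`
  have hs : 0 ≤ s := by
    obtain ⟨p, hp, -⟩ := mem_iUnion₂.1 (hPcov 0 hG.some_mem)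
    have hone : (1 : ℝ≥0∞) ≤ ENNReal.ofReal (R 0 ^ (-s)) :=
      le_trans (by exact_mod_cast Set.one_le_encard_iff_nonempty.2 ⟨p, hp⟩) (hPcard 0)
    by_contra! hs
    exact (ENNReal.one_le_ofReal.1 hone).not_gt
      (Real.rpow_lt_one (hR0 0).le (hRP 0).2.2 (by linarith))
  have hμH := hausdorffMeasure_le_of_forall_cover hs hC
    (tendsto_nhds_of_tendsto_nhdsWithin hR) hR0 hPcard hPcov
  have hdim : dimH G ≤ ENNReal.ofReal s := by
    refine dimH_le_of_hausdorffMeasure_ne_top ?_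
    rw [Real.coe_toNNReal s hs]
    exact ne_top_of_le_ne_top ENNReal.ofReal_ne_top hμH
  rw [dimHE_of_nonempty hG, ← max_eq_left hs, ← EReal.coe_ennreal_ofReal]
  exact EReal.coe_ennreal_le_coe_ennreal_iff.2 hdim

theorem dimHE_le_liminf_ldCount {d : ℕ} {μ : Measure (Euc d)} {F : Set (Euc d)}
    {lo hi : ℝ → ℝ≥0∞} (hFs : F ⊆ msupp μ)
    (hF : ∀ x ∈ F, ∀ᶠ r in 𝓝[>] 0, lo r ≤ μ (closedBall x r) ∧ μ (closedBall x r) ≤ hi r) :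
    dimHE F ≤ liminf
      (fun r : ℝ => elog (ldCount μ (lo r) (hi r) r) * (((-Real.log r)⁻¹ : ℝ) : EReal))
      (𝓝[>] 0) := by
  refine EReal.le_of_forall_lt_iff_le.1 fun z hz => ?_
  have hcount : ∃ᶠ r in 𝓝[>] 0, ldCount μ (lo r) (hi r) r ≤ ENNReal.ofReal (r ^ (-z)) :=
    ((frequently_lt_of_liminf_lt (by isBoundedDefault) hz).and_eventually
      (Ioo_mem_nhdsGT one_pos)).mono fun r ⟨h, hr⟩ =>
      le_ofReal_rpow_neg_of_elog_mul_inv_neg_log_lt hr.1 hr.2 h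
  rw [eq_iUnion_setOf_forall_Ioo hF]
  refine dimHE_iUnion_le fun n => dimHE_le_of_frequently_cover (C := 4) zero_le_four ?_
  have hn : (0 : ℝ) < 1 / (n + 1) := Nat.one_div_pos_of_nat
  refine (hcount.and_eventually (Ioo_mem_nhdsGT hn)).mono fun r ⟨hN, hr⟩ => ?_
  obtain ⟨P, hPG, hPd, hcov⟩ :=
    Vitali.exists_disjoint_subfamily_covering_enlargement_closedBall
      {x ∈ F | ∀ r ∈ Ioo 0 (1 / (n + 1 : ℝ)), lo r ≤ μ (closedBall x r) ∧
        μ (closedBall x r) ≤ hi r} id (fun _ => r) r (fun _ _ => le_rfl) 4 (by norm_num)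
  refine ⟨P, (encard_le_ldCount ⟨fun x hx => hFs (hPG hx).1, hPd⟩
    fun x hx => (hPG hx).2 r hr).trans hN, fun x hx => ?_⟩
  obtain ⟨p, hp, hsub⟩ := hcov x hx
  exact mem_biUnion hp (hsub (mem_closedBall_self hr.1.le))

theorem statement16_general (d : ℕ) (μ : Measure (Euc d)) (hμ : McPlus μ)
    (α β : EReal) (h0 : 0 ≤ α) (hab : α ≤ β) :
    dimHE {x ∈ msupp μ | α ≤ dLow μ x ∧ dUp μ x ≤ β} ≤ fLDlowAB μ α β := by
  have : IsFiniteMeasure μ := hμ.1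
  have hFs : {x ∈ msupp μ | α ≤ dLow μ x ∧ dUp μ x ≤ β} ⊆ msupp μ := sep_subset _ _
  rw [fLDlowAB]
  split_ifs with hα
  · refine le_iInf fun A => dimHE_le_liminf_ldCount hFs fun x hx => ?_
    have hA : (A : EReal) < dLow μ x := (EReal.coe_lt_top A).trans_le (hα ▸ hx.2.1)
    exact (eventually_measure_closedBall_le_rpow hx.1 hA).mono fun r hr => ⟨zero_le, hr⟩
  · have hβ : β ≠ ⊥ := ne_bot_of_le_ne_bot (h0.trans_lt' EReal.bot_lt_zero).ne' hab
    refine le_iInf₂ fun ε hε => dimHE_le_liminf_ldCount hFs fun x hx => ?_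
    exact (eventually_rpowE_add_le_measure_closedBall hx.1 hβ hx.2.2 hε).and
      (eventually_measure_closedBall_le_rpowE_sub hx.1 hα hx.2.1 hε)

/-- from Section 5.2: `dim_H F(α,β) ≤ f̲^LD_μ(α,β)` where
`F(α,β) = {x ∈ supp μ : α ≤ d̲(μ,x), d̄(μ,x) ≤ β}`. -/
theorem statement16 (d : ℕ) (hd : 1 ≤ d) (μ : Measure (Euc d)) (hμ : McPlus μ)
    (α β : EReal) (h0 : 0 ≤ α) (hab : α ≤ β) :
    dimHE {x ∈ msupp μ | α ≤ dLow μ x ∧ dUp μ x ≤ β} ≤ fLDlowAB μ α β :=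
  statement16_general d μ hμ α β h0 hab

end
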